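/- arXiv:1905.13320 — 2 statements merged into one kernel-verified Lean document; each statement's English description precedes it below -/
import Mathlib

section
/- In a deterministic MDP with reward function uniformly Lipschitz in A with constant K, using a multi-step model {T̂_h : h ∈ [1,H]}, and assuming the policy assigns the same action probabilities at predicted and true h-step states, the absolute difference between the true H-step value E[V_H^π(s_1)] and the approximate value is at most K · Σ_{h=1}^{H−1} E[ ‖T_h(s_1, a_1..h) − T̂_h(s_1, a_1..h)‖ ]. -/
/-!
Both values are expectations over action sequences, and the assumption on the policy makes the
model's path probability of every sequence equal to its true one. So the values differ only
through the rewards under a common weighting, and by the Lipschitz bound the reward gap at step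
`h` is at most `K` times the `h`-step prediction error. A quantity depending only on the first `h`
actions has the same expectation over `h`-step sequences, and step `0` contributes nothing since
the model starts at the true state.
-/

open Finset

/-- Executing a list of actions from a state with the true deterministic one-step dynamics:
`runModel T s ⟨a_1,...,a_h⟩` is the true `h`-step outcome `T_h(s, a_{1:h})`. -/
def runModel {S A : Type*} (T : S → A → S) : S → List A → S
  | s, [] => s
  | s, a :: l => runModel T (T s a) l

/-- Probability, under policy `π` and true dynamics `T`, of executing the action list from `s`. -/
def seqProb {S A : Type*} (T : S → A → S) (π : S → A → ℝ) : S → List A → ℝ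
  | _, [] => 1
  | s, a :: l => π s a * seqProb T π (T s a) l

theorem Fintype.sum_fun_fin_succ {A M : Type*} [Fintype A] [AddCommMonoid M] {n : ℕ}
    (f : (Fin (n + 1) → A) → M) :
    ∑ v, f v = ∑ a, ∑ w : Fin n → A, f (Fin.cons a w) := by
  rw [← (Fin.consEquiv fun _ => A).sum_comp f, Fintype.sum_prod_type]
  rfl

theorem abs_sum_mul_sum_sub_le {ι κ E A : Type*} [Fintype ι] [Fintype κ]
    [SeminormedAddCommGroup E] {R : E → A → ℝ} {K : NNReal}
    (hR : ∀ a, LipschitzWith K fun x => R x a) {p : ι → ℝ} (hp : ∀ i, 0 ≤ p i)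
    (a : ι → κ → A) (x y : ι → κ → E) :
    |∑ i, p i * ∑ k, R (x i k) (a i k) - ∑ i, p i * ∑ k, R (y i k) (a i k)| ≤
      K * ∑ k, ∑ i, p i * ‖x i k - y i k‖ := by
  have hstep (i : ι) (k : κ) : |R (x i k) (a i k) - R (y i k) (a i k)| ≤ K * ‖x i k - y i k‖ := by
    simpa only [dist_eq_norm, Real.norm_eq_abs] using (hR (a i k)).dist_le_mul (x i k) (y i k)
  calc _ = |∑ i, p i * ∑ k, (R (x i k) (a i k) - R (y i k) (a i k))| := by
        simp only [mul_sub, sum_sub_distrib]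
    _ ≤ ∑ i, p i * ∑ k, K * ‖x i k - y i k‖ := by
        refine (abs_sum_le_sum_abs _ _).trans (sum_le_sum fun i _ => ?_)
        rw [abs_mul, abs_of_nonneg (hp i)]
        exact mul_le_mul_of_nonneg_left
          ((abs_sum_le_sum_abs _ _).trans (sum_le_sum fun k _ => hstep i k)) (hp i)
    _ = _ := by
        simp only [← mul_sum]
        rw [sum_comm]
        simp only [mul_sum, mul_left_comm]

section PathProbability

variable {S A : Type*} (T : S → A → S) (π : S → A → ℝ)

theorem seqProb_nonneg (hπ : ∀ s a, 0 ≤ π s a) : ∀ (s : S) (l : List A), 0 ≤ seqProb T π s l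
  | _, [] => zero_le_one
  | s, a :: l => mul_nonneg (hπ s a) (seqProb_nonneg hπ (T s a) l)

theorem prod_runModel_take_eq_seqProb : ∀ {n : ℕ} (s : S) (v : Fin n → A),
    ∏ i : Fin n, π (runModel T s ((List.ofFn v).take i)) (v i) = seqProb T π s (List.ofFn v)
  | 0, _, _ => rfl
  | n + 1, s, v => by
      rw [Fin.prod_univ_succ, List.ofFn_succ, seqProb,
        ← prod_runModel_take_eq_seqProb (T s (v 0))]
      rfl

variable [Fintype A]

theorem sum_seqProb_ofFn (hπ : ∀ s, ∑ a, π s a = 1) :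
    ∀ (n : ℕ) (s : S), ∑ v : Fin n → A, seqProb T π s (List.ofFn v) = 1
  | 0, _ => by simp [seqProb]
  | n + 1, s => by
      simp only [Fintype.sum_fun_fin_succ, List.ofFn_cons, seqProb, ← mul_sum,
        sum_seqProb_ofFn hπ n, mul_one, hπ]

theorem sum_seqProb_mul_take (hπ : ∀ s, ∑ a, π s a = 1) :
    ∀ {h n : ℕ}, h ≤ n → ∀ (s : S) (g : List A → ℝ),
    ∑ v : Fin n → A, seqProb T π s (List.ofFn v) * g ((List.ofFn v).take h) =
      ∑ w : Fin h → A, seqProb T π s (List.ofFn w) * g (List.ofFn w)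
  | 0, n, _, s, g => by
      simp only [List.take_zero, ← sum_mul, sum_seqProb_ofFn T π hπ]
      simp [seqProb]
  | h + 1, n + 1, hhn, s, g => by
      simp only [Fintype.sum_fun_fin_succ, List.ofFn_cons, seqProb, List.take_succ_cons,
        mul_assoc, ← mul_sum]
      refine sum_congr rfl fun a _ => ?_
      rw [sum_seqProb_mul_take hπ (Nat.le_of_succ_le_succ hhn) (T s a) fun l => g (a :: l)]

end PathProbability

theorem value_error_multi_step_general {S A : Type*} [NormedAddCommGroup S]
    [Fintype A] (T : S → A → S) (M : ℕ → S → List A → S)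
    (R : S → A → ℝ) (π : S → A → ℝ) (K : NNReal)
    (hR : ∀ a : A, LipschitzWith K (fun s => R s a))
    (hπ_nonneg : ∀ s a, 0 ≤ π s a) (hπ_sum : ∀ s, ∑ a : A, π s a = 1)
    (H : ℕ) (s₁ : S)
    (hM0 : ∀ s : S, M 0 s [] = s)
    (hπ_eq : ∀ l : List A, π (runModel T s₁ l) = π (M l.length s₁ l)) :
    |(∑ v : Fin H → A,
        (∏ h : Fin H, π (runModel T s₁ ((List.ofFn v).take h)) (v h)) *
          ∑ h : Fin H, R (runModel T s₁ ((List.ofFn v).take h)) (v h)) -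
      (∑ v : Fin H → A,
        (∏ h : Fin H, π (M h s₁ ((List.ofFn v).take h)) (v h)) *
          ∑ h : Fin H, R (M h s₁ ((List.ofFn v).take h)) (v h))| ≤
    (K : ℝ) * ∑ h ∈ Finset.Ico 1 H, ∑ v : Fin h → A,
        seqProb T π s₁ (List.ofFn v) *
          ‖runModel T s₁ (List.ofFn v) - M h s₁ (List.ofFn v)‖ := by
  have hmodel (v : Fin H → A) :
      ∏ h : Fin H, π (M h s₁ ((List.ofFn v).take h)) (v h) = seqProb T π s₁ (List.ofFn v) := by
    rw [← prod_runModel_take_eq_seqProb]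
    refine prod_congr rfl fun h _ => ?_
    rw [hπ_eq, List.length_take_of_le (by rw [List.length_ofFn]; exact h.is_lt.le)]
  have htrue (v : Fin H → A) := prod_runModel_take_eq_seqProb T π s₁ v
  simp only [hmodel, htrue]
  refine (abs_sum_mul_sum_sub_le hR (p := fun v => seqProb T π s₁ (List.ofFn v))
    (fun v => seqProb_nonneg T π hπ_nonneg s₁ _) (fun v => v)
    (fun v h => runModel T s₁ ((List.ofFn v).take h))
    (fun v h => M h s₁ ((List.ofFn v).take h))).trans_eq ?_
  set err : ℕ → ℝ := fun h => ∑ v : Fin h → A, seqProb T π s₁ (List.ofFn v) *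
    ‖runModel T s₁ (List.ofFn v) - M h s₁ (List.ofFn v)‖
  have herr0 : err 0 = 0 := by simp [err, runModel, hM0]
  calc _ = (K : ℝ) * ∑ h : Fin H, err h := by
        congr 1
        exact sum_congr rfl fun h _ => sum_seqProb_mul_take T π hπ_sum h.is_lt.le s₁
          fun l => ‖runModel T s₁ l - M h s₁ l‖
    _ = (K : ℝ) * ∑ h ∈ Ico 1 H, err h := by
        rw [Fin.sum_univ_eq_sum_range err, range_eq_Ico]
        rcases Nat.eq_zero_or_pos H with rfl | hH
        · rfl
        · rw [sum_eq_sum_Ico_succ_bot hH, herr0, zero_add]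

/-- Value-error bound for the multi-step model (Theorem 2): with a multi-step model
`M h s (a_{1:h}) ≈ T_h(s, a_{1:h})`, assuming the policy assigns the same action
probabilities at predicted and true `h`-step states, the value error is at most
`K · Σ_{h=1}^{H−1} E[‖T_h(s₁,a_{1:h}) − M h s₁ a_{1:h}‖]`. -/
theorem value_error_multi_step {S A : Type*} [NormedAddCommGroup S] [NormedSpace ℝ S]
    [Fintype A] (T : S → A → S) (M : ℕ → S → List A → S)
    (R : S → A → ℝ) (π : S → A → ℝ) (K : NNReal)
    (hR : ∀ a : A, LipschitzWith K (fun s => R s a))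
    (hπ_nonneg : ∀ s a, 0 ≤ π s a) (hπ_sum : ∀ s, ∑ a : A, π s a = 1)
    (H : ℕ) (s₁ : S)
    (hM0 : ∀ s : S, M 0 s [] = s)
    (hπ_eq : ∀ l : List A, π (runModel T s₁ l) = π (M l.length s₁ l)) :
    |(∑ v : Fin H → A,
        (∏ h : Fin H, π (runModel T s₁ ((List.ofFn v).take h)) (v h)) *
          ∑ h : Fin H, R (runModel T s₁ ((List.ofFn v).take h)) (v h)) -
      (∑ v : Fin H → A,
        (∏ h : Fin H, π (M h s₁ ((List.ofFn v).take h)) (v h)) *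
          ∑ h : Fin H, R (M h s₁ ((List.ofFn v).take h)) (v h))| ≤
    (K : ℝ) * ∑ h ∈ Finset.Ico 1 H, ∑ v : Fin h → A,
        seqProb T π s₁ (List.ofFn v) *
          ‖runModel T s₁ (List.ofFn v) - M h s₁ (List.ofFn v)‖ :=
  value_error_multi_step_general T M R π K hR hπ_nonneg hπ_sum H s₁ hM0 hπ_eq
end

section
/- Symmetrization inequality: for an i.i.d. sample z_1,...,z_n and a function class G with values in ℝ, E[ sup_{g∈G} ( E[g] − (1/n)Σ_i g(z_i) ) ] ≤ 2 · E_{z,σ}[ sup_{g∈G} (1/n) Σ_i σ_i g(z_i) ], where σ_i are i.i.d. Rademacher variables independent of the sample. -/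
/-!
Replace `E[g]` by the empirical mean of an independent ghost sample `z'` and pull the supremum
inside that expectation: the left side is at most `E sup_g (P_{z'} g - P_z g)`. The law of the
pair of samples is invariant under exchanging `z j` and `z' j` at any set of coordinates, so the
differences may be multiplied by arbitrary signs `σ j`; averaging over `σ` and splitting the
supremum of the signed difference into two suprema gives twice the Rademacher average.
-/

open Finset MeasureTheory

/-- Real-valued sign of a Boolean Rademacher variable. -/
def rsign (b : Bool) : ℝ := if b then 1 else -1

open scoped BigOperators

lemma abs_rsign (b : Bool) : |rsign b| = 1 := by cases b <;> simp [rsign]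

lemma abs_expect_le_of_abs_le {κ : Type*} [Fintype κ] [Nonempty κ] {a : κ → ℝ} {C : ℝ}
    (h : ∀ j, |a j| ≤ C) : |𝔼 j, a j| ≤ C :=
  (abs_expect_le _ _).trans (expect_le univ_nonempty fun j _ => h j)

lemma bddAbove_range_of_abs_le {ι : Type*} {u : ι → ℝ} {C : ℝ} (h : ∀ i, |u i| ≤ C) :
    BddAbove (Set.range u) :=
  ⟨C, Set.forall_mem_range.2 fun i => (abs_le.1 (h i)).2⟩

lemma abs_ciSup_le {ι : Type*} [Nonempty ι] {u : ι → ℝ} {C : ℝ} (h : ∀ i, |u i| ≤ C) :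
    |⨆ i, u i| ≤ C := by
  obtain ⟨i⟩ := ‹Nonempty ι›
  refine abs_le.2 ⟨(abs_le.1 (h i)).1.trans (le_ciSup (bddAbove_range_of_abs_le h) i), ?_⟩
  exact ciSup_le fun i => (abs_le.1 (h i)).2

@[fun_prop]
lemma Finset.measurable_expect {X κ : Type*} [MeasurableSpace X] (s : Finset κ)
    {h : κ → X → ℝ} (hh : ∀ j, Measurable (h j)) : Measurable fun x => 𝔼 j ∈ s, h j x := by
  simp_rw [Finset.expect_eq_sum_div_card]
  exact (Finset.measurable_sum s fun j _ => hh j).div_const _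

section Integrals

variable {X : Type*} [MeasurableSpace X] {P : Measure X}

lemma integrable_of_abs_le [IsFiniteMeasure P] {u : X → ℝ} {C : ℝ} (hm : Measurable u)
    (hb : ∀ x, |u x| ≤ C) : Integrable u P :=
  .of_bound hm.aestronglyMeasurable C (ae_of_all _ hb)

lemma integrable_iSup_of_abs_le {ι : Type*} [Countable ι] [Nonempty ι] [IsFiniteMeasure P]
    {h : ι → X → ℝ} {C : ℝ} (hm : ∀ i, Measurable (h i)) (hb : ∀ i x, |h i x| ≤ C) :
    Integrable (fun x => ⨆ i, h i x) P :=
  integrable_of_abs_le (Measurable.iSup hm) fun x => abs_ciSup_le fun i => hb i x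

lemma ciSup_integral_le_integral_ciSup {ι : Type*} [Nonempty ι] {h : ι → X → ℝ}
    (hint : ∀ i, Integrable (h i) P) (hsup : Integrable (fun x => ⨆ i, h i x) P)
    (hbdd : ∀ x, BddAbove (Set.range fun i => h i x)) :
    ⨆ i, ∫ x, h i x ∂P ≤ ∫ x, ⨆ i, h i x ∂P :=
  ciSup_le fun i => integral_mono (hint i) hsup fun x => le_ciSup (hbdd x) i

lemma integral_expect {κ : Type*} [Fintype κ] {F : κ → X → ℝ} (hF : ∀ i, Integrable (F i) P) :
    ∫ x, 𝔼 i, F i x ∂P = 𝔼 i, ∫ x, F i x ∂P := by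
  simp_rw [Fintype.expect_eq_sum_div_card]
  rw [integral_div, integral_finsetSum _ fun i _ => hF i]

end Integrals

lemma integral_expect_comp_eval {Z κ : Type*} [MeasurableSpace Z] [Fintype κ] [Nonempty κ]
    (μ : Measure Z) [IsProbabilityMeasure μ] {φ : Z → ℝ} (hφ : Integrable φ μ) :
    ∫ z, 𝔼 j, φ (z j) ∂(Measure.pi fun _ : κ => μ) = ∫ x, φ x ∂μ := by
  rw [integral_expect fun j => integrable_comp_eval hφ]
  calc 𝔼 j, ∫ z, φ (z j) ∂(Measure.pi fun _ : κ => μ) = 𝔼 _j : κ, ∫ x, φ x ∂μ :=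
        expect_congr rfl fun j _ => integral_comp_eval hφ.aestronglyMeasurable
    _ = ∫ x, φ x ∂μ := Fintype.expect_const _

section SignExchange

variable {α κ : Type*} [MeasurableSpace α]

def swapIf (b : Bool) : α × α ≃ᵐ α × α :=
  if b then MeasurableEquiv.refl (α × α) else MeasurableEquiv.prodComm

lemma measurePreserving_swapIf (μ : Measure α) [SigmaFinite μ] (b : Bool) :
    MeasurePreserving (swapIf b) (μ.prod μ) (μ.prod μ) := by
  cases b
  · exact Measure.measurePreserving_swap
  · exact .id _

def signExchange (σ : κ → Bool) : ((κ → α) × (κ → α)) ≃ᵐ ((κ → α) × (κ → α)) :=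
  (MeasurableEquiv.arrowProdEquivProdArrow α α κ).symm.trans
    ((MeasurableEquiv.piCongrRight fun j => swapIf (σ j)).trans
      (MeasurableEquiv.arrowProdEquivProdArrow α α κ))

lemma signExchange_apply (σ : κ → Bool) (p : (κ → α) × (κ → α)) :
    signExchange σ p =
      (fun j => if σ j then p.1 j else p.2 j, fun j => if σ j then p.2 j else p.1 j) := by
  ext j <;> cases h : σ j <;>
    simp [signExchange, swapIf, h, MeasurableEquiv.arrowProdEquivProdArrow,
      Equiv.arrowProdEquivProdArrow, MeasurableEquiv.piCongrRight, MeasurableEquiv.prodComm]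

lemma measurePreserving_signExchange [Fintype κ] (μ : Measure α) [SigmaFinite μ]
    (σ : κ → Bool) :
    MeasurePreserving (signExchange σ)
      ((Measure.pi fun _ : κ => μ).prod (Measure.pi fun _ : κ => μ))
      ((Measure.pi fun _ : κ => μ).prod (Measure.pi fun _ : κ => μ)) := by
  have unzip := measurePreserving_arrowProdEquivProdArrow α α κ (fun _ => μ) (fun _ => μ)
  have swaps : MeasurePreserving (MeasurableEquiv.piCongrRight fun j => swapIf (σ j))
      (Measure.pi fun _ : κ => μ.prod μ) (Measure.pi fun _ : κ => μ.prod μ) :=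
    measurePreserving_pi _ _ fun j => measurePreserving_swapIf μ (σ j)
  exact unzip.comp (swaps.comp unzip.symm)

end SignExchange

section Symmetrization

variable {Z ι κ : Type*} [Fintype κ]

noncomputable def rademacherSup (g : ι → Z → ℝ) (σ : κ → Bool) (z : κ → Z) : ℝ :=
  ⨆ f, 𝔼 j, rsign (σ j) * g f (z j)

noncomputable def ghostSampleSup (g : ι → Z → ℝ) (p : (κ → Z) × (κ → Z)) : ℝ :=
  ⨆ f, (𝔼 j, g f (p.2 j)) - 𝔼 j, g f (p.1 j)

variable [Nonempty κ] {g : ι → Z → ℝ} {M : ℝ} (hbdd : ∀ f z, |g f z| ≤ M)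
include hbdd

lemma abs_expect_rsign_mul_le (σ : κ → Bool) (f : ι) (z : κ → Z) :
    |𝔼 j, rsign (σ j) * g f (z j)| ≤ M :=
  abs_expect_le_of_abs_le fun j => by rw [abs_mul, abs_rsign, one_mul]; exact hbdd f (z j)

lemma abs_expect_sub_expect_le (f : ι) (p : (κ → Z) × (κ → Z)) :
    |(𝔼 j, g f (p.2 j)) - 𝔼 j, g f (p.1 j)| ≤ 2 * M := by
  have h₂ := abs_expect_le_of_abs_le fun j => hbdd f (p.2 j)
  have h₁ := abs_expect_le_of_abs_le fun j => hbdd f (p.1 j)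
  linarith [abs_sub (𝔼 j, g f (p.2 j)) (𝔼 j, g f (p.1 j))]

variable [MeasurableSpace Z]

lemma ghostSampleSup_signExchange_le [Nonempty ι] (σ : κ → Bool) (p : (κ → Z) × (κ → Z)) :
    ghostSampleSup g (signExchange σ p) ≤
      rademacherSup g σ p.2 + rademacherSup g (fun j => !σ j) p.1 := by
  refine ciSup_le fun f => ?_
  have hsplit : (𝔼 j, g f ((signExchange σ p).2 j)) - 𝔼 j, g f ((signExchange σ p).1 j) =
      (𝔼 j, rsign (σ j) * g f (p.2 j)) + 𝔼 j, rsign (!σ j) * g f (p.1 j) := by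
    rw [← expect_sub_distrib, ← expect_add_distrib]
    refine expect_congr rfl fun j _ => ?_
    cases h : σ j <;>
      simp only [signExchange_apply, rsign, h, Bool.not_false, Bool.not_true, Bool.false_eq_true,
        ↓reduceIte] <;> ring
  rw [hsplit]
  exact add_le_add (le_ciSup (bddAbove_range_of_abs_le (abs_expect_rsign_mul_le hbdd σ · p.2)) f)
    (le_ciSup (bddAbove_range_of_abs_le (abs_expect_rsign_mul_le hbdd (fun j => !σ j) · p.1)) f)

variable [Countable ι] [Nonempty ι] (hmeas : ∀ f, Measurable (g f))
include hmeas

lemma integrable_rademacherSup (P : Measure (κ → Z)) [IsFiniteMeasure P] (σ : κ → Bool) :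
    Integrable (rademacherSup g σ) P :=
  integrable_iSup_of_abs_le (fun f => by fun_prop) (abs_expect_rsign_mul_le hbdd σ)

lemma integrable_ghostSampleSup (P : Measure ((κ → Z) × (κ → Z))) [IsFiniteMeasure P] :
    Integrable (ghostSampleSup g) P :=
  integrable_iSup_of_abs_le (fun f => by fun_prop) (abs_expect_sub_expect_le hbdd)

variable (μ : Measure Z) [IsProbabilityMeasure μ]

local notation "μⁿ" => Measure.pi fun _ : κ => μ

lemma iSup_sub_expect_le_integral_ghostSampleSup (z : κ → Z) :
    ⨆ f, (∫ x, g f x ∂μ) - 𝔼 j, g f (z j) ≤ ∫ z', ghostSampleSup g (z, z') ∂μⁿ := by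
  have ghost_eq (f : ι) : (∫ x, g f x ∂μ) - 𝔼 j, g f (z j) =
      ∫ z', (𝔼 j, g f (z' j)) - 𝔼 j, g f (z j) ∂μⁿ := by
    have hmean : Integrable (fun z' : κ → Z => 𝔼 j, g f (z' j)) μⁿ :=
      integrable_of_abs_le (by fun_prop) fun z' => abs_expect_le_of_abs_le fun j => hbdd f (z' j)
    rw [integral_sub hmean (integrable_const _), integral_const, probReal_univ, one_smul,
      integral_expect_comp_eval μ (integrable_of_abs_le (hmeas f) (hbdd f))]
  simp_rw [ghost_eq]
  exact ciSup_integral_le_integral_ciSup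
    (fun f => integrable_of_abs_le (by fun_prop) fun z' => abs_expect_sub_expect_le hbdd f (z, z'))
    (integrable_iSup_of_abs_le (fun f => by fun_prop)
      fun f z' => abs_expect_sub_expect_le hbdd f (z, z'))
    fun z' => bddAbove_range_of_abs_le fun f => abs_expect_sub_expect_le hbdd f (z, z')

lemma integral_iSup_sub_expect_le_integral_ghostSampleSup :
    ∫ z, ⨆ f, (∫ x, g f x ∂μ) - 𝔼 j, g f (z j) ∂μⁿ ≤ ∫ p, ghostSampleSup g p ∂(μⁿ.prod μⁿ) := by
  have hdev (f : ι) (z : κ → Z) : |(∫ x, g f x ∂μ) - 𝔼 j, g f (z j)| ≤ 2 * M := by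
    have hE : |∫ x, g f x ∂μ| ≤ M := by
      simpa using norm_integral_le_of_norm_le_const (μ := μ) (f := g f) (ae_of_all _ (hbdd f))
    have hmean := abs_expect_le_of_abs_le fun j => hbdd f (z j)
    linarith [abs_sub (∫ x, g f x ∂μ) (𝔼 j, g f (z j))]
  rw [integral_prod _ (integrable_ghostSampleSup hbdd hmeas _)]
  exact integral_mono (integrable_iSup_of_abs_le (fun f => by fun_prop) hdev)
    (integrable_ghostSampleSup hbdd hmeas _).integral_prod_left
    (iSup_sub_expect_le_integral_ghostSampleSup hbdd hmeas μ)

lemma integral_ghostSampleSup_le (σ : κ → Bool) :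
    ∫ p, ghostSampleSup g p ∂(μⁿ.prod μⁿ) ≤
      (∫ z, rademacherSup g σ z ∂μⁿ) + ∫ z, rademacherSup g (fun j => !σ j) z ∂μⁿ := by
  have h₂ := (integrable_rademacherSup hbdd hmeas μⁿ σ).comp_snd μⁿ
  have h₁ := (integrable_rademacherSup hbdd hmeas μⁿ (fun j => !σ j)).comp_fst μⁿ
  rw [← (measurePreserving_signExchange μ σ).integral_comp']
  calc _ ≤ ∫ p, rademacherSup g σ p.2 + rademacherSup g (fun j => !σ j) p.1 ∂(μⁿ.prod μⁿ) :=
        integral_mono ((integrable_ghostSampleSup hbdd hmeas _).comp_measurable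
          (signExchange σ).measurable) (h₂.add h₁) (ghostSampleSup_signExchange_le hbdd σ)
    _ = _ := by rw [integral_add h₂ h₁, integral_fun_snd, integral_fun_fst]; simp

lemma integral_ghostSampleSup_le_two_mul [DecidableEq κ] :
    ∫ p, ghostSampleSup g p ∂(μⁿ.prod μⁿ) ≤ 2 * ∫ z, 𝔼 σ, rademacherSup g σ z ∂μⁿ := by
  have hflip : 𝔼 σ : κ → Bool, ∫ z, rademacherSup g (fun j => !σ j) z ∂μⁿ =
      𝔼 σ : κ → Bool, ∫ z, rademacherSup g σ z ∂μⁿ :=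
    Fintype.expect_equiv (Function.Involutive.toPerm (fun (σ : κ → Bool) j => !σ j)
      fun σ => by simp) _ _ fun σ => rfl
  rw [integral_expect fun σ => integrable_rademacherSup hbdd hmeas _ σ]
  calc _ = 𝔼 _σ : κ → Bool, ∫ p, ghostSampleSup g p ∂(μⁿ.prod μⁿ) :=
        (Fintype.expect_const _).symm
    _ ≤ 𝔼 σ : κ → Bool, ((∫ z, rademacherSup g σ z ∂μⁿ) +
          ∫ z, rademacherSup g (fun j => !σ j) z ∂μⁿ) :=
        expect_le_expect fun σ _ => integral_ghostSampleSup_le hbdd hmeas μ σ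
    _ = _ := by rw [expect_add_distrib, hflip]; ring

end Symmetrization

/-- Symmetrization inequality: for an i.i.d. sample `z_1,...,z_n ∼ μ` and a (countable)
class of functions `g : ι → Z → [−M,M]`,
`E[sup_g (E[g] − (1/n)Σ_i g(z_i))] ≤ 2·E_{z,σ}[sup_g (1/n)Σ_i σ_i g(z_i)]`,
with the Rademacher expectation written as an average over all sign patterns. -/
theorem symmetrization {Z ι : Type*} [MeasurableSpace Z] [Countable ι] [Nonempty ι]
    (μ : Measure Z) [IsProbabilityMeasure μ] (n : ℕ) (hn : 0 < n)
    (M : ℝ) (g : ι → Z → ℝ) (hmeas : ∀ f, Measurable (g f))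
    (hbdd : ∀ f z, |g f z| ≤ M) :
    (∫ z : Fin n → Z,
        ⨆ f : ι, ((∫ w, g f w ∂μ) - (1 / (n : ℝ)) * ∑ j : Fin n, g f (z j))
      ∂(Measure.pi fun _ : Fin n => μ))
    ≤ 2 * ∫ z : Fin n → Z,
        ((∑ σ : Fin n → Bool, ⨆ f : ι, (1 / (n : ℝ)) * ∑ j : Fin n, rsign (σ j) * g f (z j))
          / 2 ^ n)
      ∂(Measure.pi fun _ : Fin n => μ) := by
  have : Nonempty (Fin n) := ⟨⟨0, hn⟩⟩
  have mean_eq (a : Fin n → ℝ) : 1 / (n : ℝ) * ∑ j, a j = 𝔼 j, a j := by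
    rw [Fintype.expect_eq_sum_div_card, Fintype.card_fin, one_div_mul_eq_div]
  have sign_avg_eq (b : (Fin n → Bool) → ℝ) : (∑ σ, b σ) / 2 ^ n = 𝔼 σ, b σ := by
    simp [Fintype.expect_eq_sum_div_card]
  simp_rw [mean_eq, sign_avg_eq]
  exact (integral_iSup_sub_expect_le_integral_ghostSampleSup hbdd hmeas μ).trans
    (integral_ghostSampleSup_le_two_mul hbdd hmeas μ)
end
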